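/- arXiv:2105.13623 — 2 statements merged into one kernel-verified Lean document; each statement's English description precedes it below -/
import Mathlib

section
/- The bias of the DR estimator satisfies |E[L_DR] − L_ideal| = (1/|D|) |Σ_{(u,i)∈D} Δ_{u,i} δ_{u,i}|, where δ_{u,i} = e_{u,i} − ê_{u,i} and Δ_{u,i} = 1 − p_{u,i}/p̂_{u,i}. -/
open MeasureTheory ProbabilityTheory

/-!
Expectation is linear and `𝔼[o_{u,i}] = p_{u,i}`, so each summand of `L_DR` has mean
`ê + p δ / p̂`; subtracting `e = ê + δ` leaves `-(1 - p / p̂) δ` per pair.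
-/

section

variable {Ω : Type*} [MeasurableSpace Ω] {μ : Measure Ω}

lemma integrable_of_ae_eq_zero_or_one [IsFiniteMeasure μ] {X : Ω → ℝ}
    (hX : AEStronglyMeasurable X μ) (h01 : ∀ᵐ ω ∂μ, X ω = 0 ∨ X ω = 1) : Integrable X μ :=
  (integrable_const (1 : ℝ)).mono' hX <| h01.mono fun ω h => by rcases h with h | h <;> simp [h]

lemma integral_const_add_mul_const [IsProbabilityMeasure μ] {X : Ω → ℝ} (hX : Integrable X μ)
    (a b : ℝ) : ∫ ω, a + X ω * b ∂μ = a + (∫ ω, X ω ∂μ) * b := by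
  rw [integral_add (integrable_const a) (hX.mul_const b), integral_const, integral_mul_const,
    probReal_univ, one_smul]

end

lemma sum_add_mul_div_sub_sum {ι : Type*} (s : Finset ι) (e ehat p phat : ι → ℝ) :
    ∑ i ∈ s, (ehat i + p i * (e i - ehat i) / phat i) - ∑ i ∈ s, e i
      = -∑ i ∈ s, (1 - p i / phat i) * (e i - ehat i) := by
  rw [← Finset.sum_sub_distrib, ← Finset.sum_neg_distrib]
  refine Finset.sum_congr rfl fun i _ => ?_
  ring

theorem dr_bias_general {D : Type*} [Fintype D]
    {Ω : Type*} [MeasureSpace Ω] [IsProbabilityMeasure (ℙ : Measure Ω)]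
    (e ehat p phat : D → ℝ) (o : D → Ω → ℝ)
    (hmeas : ∀ i, Measurable (o i))
    (h01 : ∀ i, ∀ᵐ ω, o i ω = 0 ∨ o i ω = 1)
    (hmean : ∀ i, (∫ ω, o i ω) = p i) :
    |(∫ ω, (1 / (Fintype.card D : ℝ)) *
          ∑ i, (ehat i + o i ω * (e i - ehat i) / phat i))
        - (1 / (Fintype.card D : ℝ)) * ∑ i, e i|
      = (1 / (Fintype.card D : ℝ)) *
          |∑ i, (1 - p i / phat i) * (e i - ehat i)| := by
  have hint : ∀ i, Integrable (o i) := fun i =>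
    integrable_of_ae_eq_zero_or_one (hmeas i).aestronglyMeasurable (h01 i)
  have hterm : ∀ i, ∫ ω, ehat i + o i ω * (e i - ehat i) / phat i
      = ehat i + p i * (e i - ehat i) / phat i := fun i => by
    simp only [mul_div_assoc]
    rw [integral_const_add_mul_const (hint i), hmean i]
  have hsum : ∫ ω, ∑ i, (ehat i + o i ω * (e i - ehat i) / phat i)
      = ∑ i, (ehat i + p i * (e i - ehat i) / phat i) := by
    rw [integral_finsetSum _ fun i _ => ?_]
    · exact Finset.sum_congr rfl fun i _ => hterm i
    · simp only [mul_div_assoc]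
      exact (integrable_const _).add ((hint i).mul_const _)
  rw [integral_const_mul, hsum, ← mul_sub, sum_add_mul_div_sub_sum, abs_mul, abs_neg,
    abs_of_nonneg (by positivity)]

/-- The bias of the DR estimator equals `(1/|D|)|∑ Δ_{u,i} δ_{u,i}|` where
`δ_{u,i} = e_{u,i} - ê_{u,i}` and `Δ_{u,i} = 1 - p_{u,i}/p̂_{u,i}`. -/
theorem dr_bias {D : Type*} [Fintype D] [Nonempty D]
    {Ω : Type*} [MeasureSpace Ω] [IsProbabilityMeasure (ℙ : Measure Ω)]
    (e ehat p phat : D → ℝ) (o : D → Ω → ℝ)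
    (hmeas : ∀ i, Measurable (o i))
    (h01 : ∀ i, ∀ᵐ ω, o i ω = 0 ∨ o i ω = 1)
    (hmean : ∀ i, (∫ ω, o i ω) = p i)
    (hindep : iIndepFun o ℙ)
    (hp0 : ∀ i, 0 ≤ p i) (hp1 : ∀ i, p i ≤ 1)
    (hphat : ∀ i, 0 < phat i) :
    |(∫ ω, (1 / (Fintype.card D : ℝ)) *
          ∑ i, (ehat i + o i ω * (e i - ehat i) / phat i))
        - (1 / (Fintype.card D : ℝ)) * ∑ i, e i|
      = (1 / (Fintype.card D : ℝ)) *
          |∑ i, (1 - p i / phat i) * (e i - ehat i)| :=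
  dr_bias_general e ehat p phat o hmeas h01 hmean
end

section
/- Variance reduction of DR over IPS: if for every (u,i) ∈ D the imputed error satisfies 0 ≤ ê_{u,i} ≤ 2 e_{u,i}, then Var[L_DR] ≤ Var[L_IPS]. -/
open MeasureTheory ProbabilityTheory

/-!
Both estimators are affine in the independent indicators `o i`: the DR summand is
`ê i + o i * (e i - ê i) / p̂ i` and the IPS summand is `o i * e i / p̂ i`. By independence the
variance of either sum is `∑ (coefficient of o i)² * Var[o i]`, the constants `ê i` not
contributing. The hypothesis `0 ≤ ê i ≤ 2 e i` gives `(e i - ê i)² ≤ (e i)²`, so the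
comparison holds term by term.
-/

lemma sq_sub_le_sq_of_nonneg_of_le_two_mul {x y : ℝ} (hy : 0 ≤ y) (hyx : y ≤ 2 * x) :
    (x - y) ^ 2 ≤ x ^ 2 := by
  nlinarith

namespace ProbabilityTheory

variable {Ω ι : Type*} {mΩ : MeasurableSpace Ω} {μ : Measure Ω}

lemma memLp_of_ae_eq_zero_or_one [IsFiniteMeasure μ] {X : Ω → ℝ}
    (hX : AEStronglyMeasurable X μ) (h01 : ∀ᵐ ω ∂μ, X ω = 0 ∨ X ω = 1) (p : ENNReal) :
    MemLp X p μ :=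
  .of_bound hX 1 <| h01.mono fun ω hω => by rcases hω with h | h <;> simp [h]

variable {X : ι → Ω → ℝ} {s : Finset ι}

lemma IndepFun.variance_fun_sum_mul_const (hX : ∀ i ∈ s, MemLp (X i) 2 μ)
    (hindep : Set.Pairwise ↑s fun i j => X i ⟂ᵢ[μ] X j) (a : ι → ℝ) :
    Var[fun ω ↦ ∑ i ∈ s, X i ω * a i; μ] = ∑ i ∈ s, a i ^ 2 * Var[X i; μ] := by
  have hsum := IndepFun.variance_sum (s := s) (X := fun i ω => X i ω * a i)
    (fun i hi => (hX i hi).mul_const (a i))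
    (fun i hi j hj hij => (hindep hi hj hij).comp
      (measurable_id.mul_const (a i)) (measurable_id.mul_const (a j)))
  simp only [Finset.sum_fn] at hsum
  rw [hsum]
  exact Finset.sum_congr rfl fun i _ => by rw [variance_mul_const, mul_comm]

lemma IndepFun.variance_fun_sum_const_add_mul_const [IsProbabilityMeasure μ]
    (hX : ∀ i ∈ s, MemLp (X i) 2 μ) (hindep : Set.Pairwise ↑s fun i j => X i ⟂ᵢ[μ] X j)
    (c a : ι → ℝ) :
    Var[fun ω ↦ ∑ i ∈ s, (c i + X i ω * a i); μ] = ∑ i ∈ s, a i ^ 2 * Var[X i; μ] := by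
  have hmeas : AEStronglyMeasurable (fun ω ↦ ∑ i ∈ s, X i ω * a i) μ :=
    Finset.aestronglyMeasurable_fun_sum s fun i hi => (hX i hi).1.mul_const (a i)
  simp only [Finset.sum_add_distrib]
  rw [variance_const_add hmeas, IndepFun.variance_fun_sum_mul_const hX hindep]

end ProbabilityTheory

theorem dr_variance_le_ips_variance_general {D : Type*} [Fintype D]
    {Ω : Type*} [MeasureSpace Ω] [IsProbabilityMeasure (ℙ : Measure Ω)]
    (e ehat phat : D → ℝ) (o : D → Ω → ℝ)
    (hmeas : ∀ i, Measurable (o i))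
    (h01 : ∀ i, ∀ᵐ ω, o i ω = 0 ∨ o i ω = 1)
    (hindep : iIndepFun o ℙ)
    (hehat : ∀ i, 0 ≤ ehat i ∧ ehat i ≤ 2 * e i) :
    variance (fun ω => (1 / (Fintype.card D : ℝ)) *
        ∑ i, (ehat i + o i ω * (e i - ehat i) / phat i)) ℙ
      ≤ variance (fun ω => (1 / (Fintype.card D : ℝ)) *
          ∑ i, o i ω * e i / phat i) ℙ := by
  have ho : ∀ i, MemLp (o i) 2 ℙ := fun i =>
    memLp_of_ae_eq_zero_or_one (hmeas i).aestronglyMeasurable (h01 i) 2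
  have hpair : Set.Pairwise ↑(Finset.univ : Finset D) fun i j => o i ⟂ᵢ[ℙ] o j :=
    fun i _ j _ hij => hindep.indepFun hij
  simp only [mul_div_assoc, variance_const_mul,
    IndepFun.variance_fun_sum_const_add_mul_const (fun i _ => ho i) hpair,
    IndepFun.variance_fun_sum_mul_const (fun i _ => ho i) hpair, div_pow]
  gcongr _ * ∑ i, ?_ / _ * _ with i
  · exact variance_nonneg _ _
  exact sq_sub_le_sq_of_nonneg_of_le_two_mul (hehat i).1 (hehat i).2

/-- Variance reduction of the DR estimator over the IPS estimator when
`0 ≤ ê_{u,i} ≤ 2 e_{u,i}` for every pair. -/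
theorem dr_variance_le_ips_variance {D : Type*} [Fintype D] [Nonempty D]
    {Ω : Type*} [MeasureSpace Ω] [IsProbabilityMeasure (ℙ : Measure Ω)]
    (e ehat p phat : D → ℝ) (o : D → Ω → ℝ)
    (hmeas : ∀ i, Measurable (o i))
    (h01 : ∀ i, ∀ᵐ ω, o i ω = 0 ∨ o i ω = 1)
    (hmean : ∀ i, (∫ ω, o i ω) = p i)
    (hindep : iIndepFun o ℙ)
    (hp0 : ∀ i, 0 ≤ p i) (hp1 : ∀ i, p i ≤ 1)
    (hphat : ∀ i, 0 < phat i)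
    (he0 : ∀ i, 0 ≤ e i)
    (hehat : ∀ i, 0 ≤ ehat i ∧ ehat i ≤ 2 * e i) :
    variance (fun ω => (1 / (Fintype.card D : ℝ)) *
        ∑ i, (ehat i + o i ω * (e i - ehat i) / phat i)) ℙ
      ≤ variance (fun ω => (1 / (Fintype.card D : ℝ)) *
          ∑ i, o i ω * e i / phat i) ℙ :=
  dr_variance_le_ips_variance_general e ehat phat o hmeas h01 hindep hehat
end
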